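/- For all real numbers c1, c2, c3 and all j, k ∈ {1,2,3,4} with j ≠ k, the concurrence of the state U_d(c1,c2,c3)·ψ±_jk, where ψ±_jk = (Ψ_j ± i Ψ_k)/√2, equals (1/2)|e^{i h_j} − e^{i h_k}|, i.e. half the length L_jk of the chord joining e^{i h_j} and e^{i h_k} on the unit circle; equivalently, the squared concurrence equals (2 − 2cos(h_j − h_k))/4. -/

import Mathlib

/-!
In the magic basis `U_d` is diagonal, `U_d Ψ_j = e^{i h_j / 2} Ψ_j`, because each `Ψ_j` is a
common eigenvector of `σx⊗σx`, `σy⊗σy` and `σz⊗σz`. The magic basis is moreover orthonormal for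
the complex *bilinear* form polarising `2(αδ − βγ)`, so a state `∑ a_j Ψ_j` has concurrence
`|∑ a_j²|`. For `ψ±_jk` the coefficients after applying `U_d` are `e^{i h_j/2}/√2` and
`±i e^{i h_k/2}/√2`, whose squares sum to `(e^{i h_j} − e^{i h_k})/2`.
-/

open Matrix Complex
open scoped Matrix Kronecker

noncomputable section

/-- Pauli matrices -/
def σx : Matrix (Fin 2) (Fin 2) ℂ := !![0, 1; 1, 0]
def σy : Matrix (Fin 2) (Fin 2) ℂ := !![0, -Complex.I; Complex.I, 0]
def σz : Matrix (Fin 2) (Fin 2) ℂ := !![1, 0; 0, -1]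

/-- H(c₁,c₂,c₃) = c₁ σx⊗σx + c₂ σy⊗σy + c₃ σz⊗σz -/
def Hmat (c1 c2 c3 : ℝ) : Matrix (Fin 2 × Fin 2) (Fin 2 × Fin 2) ℂ :=
  (c1 : ℂ) • (σx ⊗ₖ σx) + (c2 : ℂ) • (σy ⊗ₖ σy) + (c3 : ℂ) • (σz ⊗ₖ σz)

/-- U_d(c₁,c₂,c₃) = exp(i H(c₁,c₂,c₃)/2) (matrix exponential) -/
def Ud (c1 c2 c3 : ℝ) : Matrix (Fin 2 × Fin 2) (Fin 2 × Fin 2) ℂ :=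
  NormedSpace.exp ((Complex.I / 2) • Hmat c1 c2 c3)

/-- h₁ = c₁−c₂+c₃, h₂ = c₁+c₂−c₃, h₃ = −c₁−c₂−c₃, h₄ = −c₁+c₂+c₃ -/
def hval (c1 c2 c3 : ℝ) : Fin 4 → ℝ :=
  ![c1 - c2 + c3, c1 + c2 - c3, -c1 - c2 - c3, -c1 + c2 + c3]

/-- computational basis vector |ab⟩ of ℂ⁴ = ℂ²⊗ℂ², indexed by pairs -/
def ket (a b : Fin 2) : Fin 2 × Fin 2 → ℂ := fun p => if p = (a, b) then 1 else 0

/-- the magic basis Ψ₁, Ψ₂, Ψ₃, Ψ₄ -/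
def Psi : Fin 4 → (Fin 2 × Fin 2 → ℂ) :=
  ![((Real.sqrt 2 : ℂ))⁻¹ • (ket 0 0 + ket 1 1),
    (Complex.I * ((Real.sqrt 2 : ℂ))⁻¹) • (ket 0 1 + ket 1 0),
    ((Real.sqrt 2 : ℂ))⁻¹ • (ket 0 1 - ket 1 0),
    (Complex.I * ((Real.sqrt 2 : ℂ))⁻¹) • (ket 0 0 - ket 1 1)]

/-- concurrence C = 2|αδ − βγ| of a two-qubit state with components (α,β,γ,δ) -/
def conc (v : Fin 2 × Fin 2 → ℂ) : ℝ :=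
  2 * ‖v (0, 0) * v (1, 1) - v (0, 1) * v (1, 0)‖

open scoped Norms.Operator in
theorem Matrix.exp_mulVec_of_mulVec_eq_smul {𝕂 n : Type*} [RCLike 𝕂] [Fintype n] [DecidableEq n]
    {A : Matrix n n 𝕂} {v : n → 𝕂} {μ : 𝕂} (h : A *ᵥ v = μ • v) :
    NormedSpace.exp A *ᵥ v = NormedSpace.exp μ • v := by
  have hpow (m : ℕ) : A ^ m *ᵥ v = μ ^ m • v := by
    induction m with
    | zero => simp
    | succ m ih => rw [pow_succ', ← mulVec_mulVec, ih, mulVec_smul, h, smul_smul, pow_succ]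
  have hA := (NormedSpace.exp_series_hasSum_exp' (𝕂 := 𝕂) A).map (mulVec.addMonoidHomLeft v)
    (continuous_id.matrix_mulVec continuous_const)
  refine hA.unique ?_
  convert (NormedSpace.exp_series_hasSum_exp' (𝕂 := 𝕂) μ).smul_const v using 2 with m
  simp [mulVec.addMonoidHomLeft, smul_mulVec, hpow, smul_smul]

theorem Hmat_mulVec_Psi (c1 c2 c3 : ℝ) (j : Fin 4) :
    Hmat c1 c2 c3 *ᵥ Psi j = (hval c1 c2 c3 j : ℂ) • Psi j := by
  funext ⟨a, b⟩
  fin_cases j <;> fin_cases a <;> fin_cases b <;>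
    simp [Hmat, σx, σy, σz, hval, Psi, ket, mulVec, dotProduct, Fintype.sum_prod_type] <;> ring

theorem Ud_mulVec_Psi (c1 c2 c3 : ℝ) (j : Fin 4) :
    Ud c1 c2 c3 *ᵥ Psi j = Complex.exp (I * hval c1 c2 c3 j / 2) • Psi j := by
  rw [Complex.exp_eq_exp_ℂ, Ud]
  refine exp_mulVec_of_mulVec_eq_smul ?_
  rw [smul_mulVec, Hmat_mulVec_Psi, smul_smul]
  ring_nf

def detPolar (u w : Fin 2 × Fin 2 → ℂ) : ℂ :=
  u (0, 0) * w (1, 1) + w (0, 0) * u (1, 1) - u (0, 1) * w (1, 0) - w (0, 1) * u (1, 0)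

theorem conc_eq_norm_detPolar (v : Fin 2 × Fin 2 → ℂ) : conc v = ‖detPolar v v‖ := by
  rw [conc, detPolar, ← Complex.norm_two, ← norm_mul]
  ring_nf

theorem detPolar_smul_add_smul (a b : ℂ) (u w : Fin 2 × Fin 2 → ℂ) :
    detPolar (a • u + b • w) (a • u + b • w) =
      a ^ 2 * detPolar u u + 2 * a * b * detPolar u w + b ^ 2 * detPolar w w := by
  simp only [detPolar, Pi.add_apply, Pi.smul_apply, smul_eq_mul]
  ring

theorem inv_sqrt_two_sq : ((Real.sqrt 2 : ℂ))⁻¹ ^ 2 = 2⁻¹ := by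
  rw [inv_pow, ← Complex.ofReal_pow, Real.sq_sqrt zero_le_two]; norm_num

theorem detPolar_Psi (i j : Fin 4) : detPolar (Psi i) (Psi j) = if i = j then 1 else 0 := by
  fin_cases i <;> fin_cases j <;> simp [detPolar, Psi, ket] <;> grind [I_sq, inv_sqrt_two_sq]

theorem conc_smul_Psi_add_smul_Psi (a b : ℂ) {j k : Fin 4} (hjk : j ≠ k) :
    conc (a • Psi j + b • Psi k) = ‖a ^ 2 + b ^ 2‖ := by
  simp [conc_eq_norm_detPolar, detPolar_smul_add_smul, detPolar_Psi, hjk]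

theorem norm_exp_I_mul_sub_exp_I_mul_sq (x y : ℝ) :
    ‖Complex.exp (I * x) - Complex.exp (I * y)‖ ^ 2 = 2 - 2 * Real.cos (x - y) := by
  have hfactor : Complex.exp (I * x) - Complex.exp (I * y)
      = Complex.exp (I * y) * (Complex.exp (I * (x - y : ℝ)) - 1) := by
    rw [mul_sub, ← Complex.exp_add]; push_cast; ring_nf
  have hcos := Real.cos_two_mul ((x - y) / 2)
  rw [mul_div_cancel₀ _ two_ne_zero] at hcos
  rw [hfactor, norm_mul, Complex.norm_exp_I_mul_ofReal, one_mul,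
    Complex.norm_exp_I_mul_ofReal_sub_one, Real.norm_eq_abs, sq_abs]
  linarith [Real.cos_sq_add_sin_sq ((x - y) / 2)]

theorem conc_Ud_mulVec_Psi_add_smul_Psi (c1 c2 c3 : ℝ) {j k : Fin 4} (hjk : j ≠ k) {s : ℂ}
    (hs : s ^ 2 = -1) :
    conc (Ud c1 c2 c3 *ᵥ ((Real.sqrt 2 : ℂ)⁻¹ • (Psi j + s • Psi k))) =
      1 / 2 * ‖Complex.exp (I * hval c1 c2 c3 j) - Complex.exp (I * hval c1 c2 c3 k)‖ := by
  set r : ℂ := (Real.sqrt 2 : ℂ)⁻¹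
  set e : Fin 4 → ℂ := fun i => Complex.exp (I * hval c1 c2 c3 i / 2)
  have hstate :
      Ud c1 c2 c3 *ᵥ (r • (Psi j + s • Psi k)) = (r * e j) • Psi j + (r * s * e k) • Psi k := by
    rw [mulVec_smul, mulVec_add, mulVec_smul, Ud_mulVec_Psi, Ud_mulVec_Psi, smul_add, smul_smul,
      smul_smul, smul_smul, mul_assoc]
  have he_sq (i : Fin 4) : e i ^ 2 = Complex.exp (I * hval c1 c2 c3 i) := by
    rw [← Complex.exp_nat_mul]; ring_nf
  have hcoeff : (r * e j) ^ 2 + (r * s * e k) ^ 2 =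
      (Complex.exp (I * hval c1 c2 c3 j) - Complex.exp (I * hval c1 c2 c3 k)) / 2 := by
    rw [mul_pow, mul_pow, mul_pow, inv_sqrt_two_sq, hs, he_sq, he_sq]
    ring
  rw [hstate, conc_smul_Psi_add_smul_Psi _ _ hjk, hcoeff, norm_div, Complex.norm_two]
  ring

/-- The concurrence of U_d(c₁,c₂,c₃)·ψ±_jk equals half the chord length
L_jk = |e^{i h_j} − e^{i h_k}|; equivalently its square is (2 − 2cos(h_j − h_k))/4. -/
theorem stmt5 (c1 c2 c3 : ℝ) (j k : Fin 4) (hjk : j ≠ k)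
    (ψp ψm : Fin 2 × Fin 2 → ℂ)
    (hψp : ψp = ((Real.sqrt 2 : ℂ))⁻¹ • (Psi j + Complex.I • Psi k))
    (hψm : ψm = ((Real.sqrt 2 : ℂ))⁻¹ • (Psi j - Complex.I • Psi k)) :
    conc ((Ud c1 c2 c3).mulVec ψp) =
      (1 / 2 : ℝ) * ‖Complex.exp (Complex.I * (hval c1 c2 c3 j : ℂ)) -
        Complex.exp (Complex.I * (hval c1 c2 c3 k : ℂ))‖ ∧
    conc ((Ud c1 c2 c3).mulVec ψm) =
      (1 / 2 : ℝ) * ‖Complex.exp (Complex.I * (hval c1 c2 c3 j : ℂ)) -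
        Complex.exp (Complex.I * (hval c1 c2 c3 k : ℂ))‖ ∧
    conc ((Ud c1 c2 c3).mulVec ψp) ^ 2 =
      (2 - 2 * Real.cos (hval c1 c2 c3 j - hval c1 c2 c3 k)) / 4 ∧
    conc ((Ud c1 c2 c3).mulVec ψm) ^ 2 =
      (2 - 2 * Real.cos (hval c1 c2 c3 j - hval c1 c2 c3 k)) / 4 := by
  subst hψp hψm
  have hplus := conc_Ud_mulVec_Psi_add_smul_Psi c1 c2 c3 hjk I_sq
  have hminus := conc_Ud_mulVec_Psi_add_smul_Psi c1 c2 c3 hjk (s := -I) (by rw [neg_sq, I_sq])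
  rw [neg_smul, ← sub_eq_add_neg] at hminus
  have hsq (C : ℝ) (hC : C = 1 / 2 * ‖Complex.exp (I * hval c1 c2 c3 j) -
      Complex.exp (I * hval c1 c2 c3 k)‖) :
      C ^ 2 = (2 - 2 * Real.cos (hval c1 c2 c3 j - hval c1 c2 c3 k)) / 4 := by
    rw [hC, mul_pow, norm_exp_I_mul_sub_exp_I_mul_sq]
    ring
  exact ⟨hplus, hminus, hsq _ hplus, hsq _ hminus⟩
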